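/- Let P be an object of K(Prj C(R)). Then P is a totally acyclic complex of projective objects of C(R) if and only if for every j ∈ ℤ, its j-th row P^j is a totally acyclic complex of projective R-modules. -/

import Mathlib

open CategoryTheory CategoryTheory.Limits

variable {V : Type*} [Category V] [Limits.HasZeroMorphisms V]

/-- The complex of abelian groups `Hom(X, Y)` is acyclic (exact at every spot). -/
def HomIntoExact (X : CochainComplex V ℤ) (Y : V) : Prop :=
  ∀ (n : ℤ) (f : X.X n ⟶ Y), X.d (n - 1) n ≫ f = 0 →
    ∃ g : X.X (n + 1) ⟶ Y, X.d n (n + 1) ≫ g = f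

/-- The complex of abelian groups `Hom(Y, X)` is acyclic (exact at every spot). -/
def HomFromExact (X : CochainComplex V ℤ) (Y : V) : Prop :=
  ∀ (n : ℤ) (f : Y ⟶ X.X n), f ≫ X.d n (n + 1) = 0 →
    ∃ g : Y ⟶ X.X (n - 1), g ≫ X.d (n - 1) n = f

/-- A complex `X` over an additive subcategory (given by the predicate `Q`) is totally
acyclic if `Hom(X, Y)` and `Hom(Y, X)` are acyclic complexes of abelian groups for every
`Y` with `Q Y`. -/
def IsTotallyAcyclic (Q : V → Prop) (X : CochainComplex V ℤ) : Prop :=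
  ∀ Y : V, Q Y → HomIntoExact X Y ∧ HomFromExact X Y

/-
Evaluation in degree `j` has a left and a right adjoint, sending `Q` to the disk `𝟙 : Q ⟶ Q` in
degrees `j, j + 1` and `j - 1, j` respectively; for projective `Q` both disks are projective
complexes, so Hom-exactness of `P` against disks is Hom-exactness of the rows against `Q`.
Conversely a projective complex `Y` is contractible (a retract of a direct sum of disks) with
projective components: the degreewise solutions given by the rows form a graded map, which the
contracting homotopy corrects to a chain map.
-/

open Opposite

theorem CategoryTheory.Projective.of_corepresentableBy {C D : Type*} [Category* C]
    [Category* D] (F : C ⥤ D) [F.PreservesEpimorphisms] {Q : D} [Projective Q] {P : C}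
    (e : (F ⋙ coyoneda.obj (op Q)).CorepresentableBy P) : Projective P where
  factors {E M} f π _ := by
    obtain ⟨g, hg⟩ := Projective.factors (e.homEquiv f : Q ⟶ F.obj M) (F.map π)
    refine ⟨e.homEquiv.symm g, e.homEquiv.injective ?_⟩
    rw [e.homEquiv_comp, Equiv.apply_symm_apply]
    exact hg

namespace HomologicalComplex

variable {C : Type*} [Category* C] [HasZeroMorphisms C] [HasZeroObject C]
  {ι : Type*} {c : ComplexShape ι} {i₀ i₁ : ι}

section

variable (hi₀₁ : c.Rel i₀ i₁) (h : i₀ ≠ i₁)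

section

variable {X₀ X₁ : C} {f : X₀ ⟶ X₁} {K : HomologicalComplex C c}
  (φ₀ : K.X i₀ ⟶ X₀) (φ₁ : K.X i₁ ⟶ X₁) (comm : K.d i₀ i₁ ≫ φ₁ = φ₀ ≫ f)
  (hφ : ∀ k : ι, c.Rel k i₀ → K.d k i₀ ≫ φ₀ = 0)

open scoped Classical in
noncomputable def mkHomToDouble : K ⟶ double f hi₀₁ where
  f k :=
    if hk₀ : k = i₀ then
      eqToHom (by rw [hk₀]) ≫ φ₀ ≫ (doubleXIso₀ f hi₀₁).inv ≫ eqToHom (by rw [hk₀])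
    else if hk₁ : k = i₁ then
      eqToHom (by rw [hk₁]) ≫ φ₁ ≫ (doubleXIso₁ f hi₀₁ h).inv ≫ eqToHom (by rw [hk₁])
    else 0
  comm' k₀ k₁ hk := by
    by_cases h₁ : k₁ = i₁
    · subst h₁
      obtain rfl := c.prev_eq hk hi₀₁
      simp [dif_neg h.symm, double_d f hi₀₁ h, reassoc_of% comm]
    · by_cases h₀ : k₁ = i₀
      · subst h₀
        simp [reassoc_of% (hφ k₀ hk), double_d_eq_zero₁ f hi₀₁ _ _ h]
      · exact (isZero_double_X f hi₀₁ k₁ h₀ h₁).eq_of_tgt _ _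

@[simp]
lemma mkHomToDouble_f₀ :
    (mkHomToDouble hi₀₁ h φ₀ φ₁ comm hφ).f i₀ = φ₀ ≫ (doubleXIso₀ f hi₀₁).inv := by
  simp [mkHomToDouble]

@[simp]
lemma mkHomToDouble_f₁ :
    (mkHomToDouble hi₀₁ h φ₀ φ₁ comm hφ).f i₁ = φ₁ ≫ (doubleXIso₁ f hi₀₁ h).inv := by
  simp [mkHomToDouble, h.symm]

end

noncomputable def toDoubleIdEquiv (X : C) (K : HomologicalComplex C c) :
    (K ⟶ double (𝟙 X) hi₀₁) ≃ (K.X i₁ ⟶ X) where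
  toFun g := g.f i₁ ≫ (doubleXIso₁ _ hi₀₁ h).hom
  invFun φ₁ := mkHomToDouble hi₀₁ h (K.d i₀ i₁ ≫ φ₁) φ₁ (by simp) (by simp)
  left_inv g := by
    ext
    · simp [← g.comm_assoc, double_d _ _ h]
    · simp
  right_inv _ := by simp

noncomputable def evalOpCompYonedaRepresentableByDoubleId (X : C) :
    ((eval C c i₁).op ⋙ yoneda.obj X).RepresentableBy (double (𝟙 X) hi₀₁) where
  homEquiv {K} := toDoubleIdEquiv hi₀₁ h X K
  homEquiv_comp _ _ := Category.assoc _ _ _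

end

lemma projective_double_id (hi₀₁ : c.Rel i₀ i₁) (h : i₀ ≠ i₁)
    [(eval C c i₀).PreservesEpimorphisms] (X : C) [Projective X] :
    Projective (double (𝟙 X) hi₀₁) :=
  Projective.of_corepresentableBy (eval C c i₀) (evalCompCoyonedaCorepresentableByDoubleId hi₀₁ h X)

lemma projective_X_of_projective (hi₀₁ : c.Rel i₀ i₁) (h : i₀ ≠ i₁)
    (Y : HomologicalComplex C c) [Projective Y] :
    Projective (Y.X i₁) where
  factors {E M} f e _ := by
    -- the right adjoint of evaluation in degree `i₁`, applied to `e`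
    let e' : double (𝟙 E) hi₀₁ ⟶ double (𝟙 M) hi₀₁ :=
      mkHomToDouble hi₀₁ h ((doubleXIso₀ _ hi₀₁).hom ≫ e) ((doubleXIso₁ _ hi₀₁ h).hom ≫ e)
        (by simp [double_d _ _ h]) (by simp [double_d_eq_zero₁ _ _ _ _ h])
    have : Epi e' := epi_of_epi_f _ fun k => by
      by_cases h₀ : k = i₀
      · subst h₀
        rw [mkHomToDouble_f₀]
        infer_instance
      by_cases h₁ : k = i₁
      · subst h₁
        rw [mkHomToDouble_f₁]
        infer_instance
      exact (isZero_double_X _ hi₀₁ k h₀ h₁).epi _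
    obtain ⟨L, hL⟩ := Projective.factors ((toDoubleIdEquiv hi₀₁ h M Y).symm f) e'
    refine ⟨toDoubleIdEquiv hi₀₁ h E Y L, ?_⟩
    have hL₁ := congr_hom hL i₁
    simp only [comp_f, toDoubleIdEquiv, Equiv.coe_fn_symm_mk, mkHomToDouble_f₁, e'] at hL₁
    simpa [toDoubleIdEquiv] using congrArg (· ≫ (doubleXIso₁ _ hi₀₁ h).hom) hL₁

end HomologicalComplex

namespace CochainComplex

variable {C : Type*} [Category* C] [Preadditive C] {Y : CochainComplex C ℤ}

lemma homotopy_id_zero_comm (hY : Homotopy (𝟙 Y) 0) {a b c : ℤ} (hab : a + 1 = b)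
    (hbc : b + 1 = c) :
    hY.hom b a ≫ Y.d a b + Y.d b c ≫ hY.hom c b = 𝟙 (Y.X b) := by
  have := hY.comm b
  rw [dNext_eq _ (show (ComplexShape.up ℤ).Rel b c from hbc),
    prevD_eq _ (show (ComplexShape.up ℤ).Rel a b from hab)] at this
  simpa [add_comm] using this.symm

lemma exists_extension_of_homotopy_id_zero (hY : Homotopy (𝟙 Y) 0) {A B : CochainComplex C ℤ}
    (φ : A ⟶ B) (F : A ⟶ Y) (g : ∀ k, B.X k ⟶ Y.X k) (hg : ∀ k, φ.f k ≫ g k = F.f k) :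
    ∃ G : B ⟶ Y, φ ≫ G = F := by
  set s := hY.hom
  -- `δ` measures how far `g` is from a chain map; it vanishes on the image of `φ`, so the
  -- correction `δ ≫ s` does not change `φ ≫ G`
  let δ i j := B.d i j ≫ g j - g i ≫ Y.d i j
  have hφδ : ∀ i j, φ.f i ≫ δ i j = 0 := fun i j => by
    rw [Preadditive.comp_sub, ← Category.assoc, φ.comm, Category.assoc, hg, ← Category.assoc,
      hg, F.comm, sub_self]
  refine ⟨{ f k := g k + δ k (k + 1) ≫ s (k + 1) k, comm' := ?_ }, ?_⟩
  · rintro i _ rfl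
    have hs : s (i + 1) i ≫ Y.d i (i + 1) =
        𝟙 _ - Y.d (i + 1) (i + 1 + 1) ≫ s (i + 1 + 1) (i + 1) :=
      eq_sub_of_add_eq (homotopy_id_zero_comm hY rfl rfl)
    simp only [δ, Preadditive.sub_comp, Preadditive.add_comp, Preadditive.comp_add,
      Preadditive.comp_sub, Category.assoc, hs, Category.comp_id,
      HomologicalComplex.d_comp_d_assoc, zero_comp, comp_zero]
    abel
  · ext k
    simp [Preadditive.comp_add, hg, reassoc_of% (hφδ k (k + 1))]

lemma exists_lift_of_homotopy_id_zero (hY : Homotopy (𝟙 Y) 0) {A B : CochainComplex C ℤ}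
    (φ : A ⟶ B) (F : Y ⟶ B) (g : ∀ k, Y.X k ⟶ A.X k) (hg : ∀ k, g k ≫ φ.f k = F.f k) :
    ∃ G : Y ⟶ A, G ≫ φ = F := by
  set s := hY.hom
  let δ i j := g i ≫ A.d i j - Y.d i j ≫ g j
  have hδφ : ∀ i j, δ i j ≫ φ.f j = 0 := fun i j => by
    rw [Preadditive.sub_comp, Category.assoc, ← φ.comm, ← Category.assoc, hg, Category.assoc,
      hg, F.comm, sub_self]
  refine ⟨{ f k := g k + s k (k - 1) ≫ δ (k - 1) k, comm' := ?_ }, ?_⟩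
  · rintro i _ rfl
    rw [show i + 1 - 1 = i by omega]
    have hs : Y.d i (i + 1) ≫ s (i + 1) i = 𝟙 _ - s i (i - 1) ≫ Y.d (i - 1) i :=
      eq_sub_of_add_eq' (homotopy_id_zero_comm hY (by omega) rfl)
    simp only [δ, Preadditive.sub_comp, Preadditive.add_comp, Preadditive.comp_add,
      Preadditive.comp_sub, ← Category.assoc, hs]
    simp only [Category.id_comp, Category.assoc,
      HomologicalComplex.d_comp_d, comp_zero, zero_comp]
    abel
  · ext k
    simp [Preadditive.add_comp, hg, hδφ (k - 1) k]

variable [HasBinaryBiproducts C] (Y : CochainComplex C ℤ)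

/-- The direct sum of the disks `𝟙 : Y.X i ⟶ Y.X i` in degrees `i, i + 1`. -/
noncomputable abbrev diskCover : CochainComplex C ℤ where
  X i := Y.X i ⊞ Y.X (i - 1)
  d i j := if h : i + 1 = j then
      biprod.fst ≫ (Y.XIsoOfEq (show i = j - 1 by omega)).hom ≫ biprod.inr
    else 0
  shape i j hij := dif_neg hij
  d_comp_d' i j k hij hjk := by
    rw [dif_pos (show i + 1 = j from hij), dif_pos (show j + 1 = k from hjk)]
    simp

namespace diskCover

lemma d_eq (i : ℤ) : (diskCover Y).d i (i + 1) =
    biprod.fst ≫ (Y.XIsoOfEq (show i = i + 1 - 1 by omega)).hom ≫ biprod.inr :=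
  dif_pos rfl

noncomputable def π : diskCover Y ⟶ Y where
  f i := biprod.desc (𝟙 (Y.X i)) (Y.d (i - 1) i)
  comm' := by
    rintro i _ rfl
    rw [d_eq]
    apply biprod.hom_ext' <;> simp

instance : Epi (π Y) :=
  HomologicalComplex.epi_of_epi_f _ fun i =>
    epi_of_epi_fac (show biprod.inl ≫ (π Y).f i = 𝟙 _ by simp [π])

noncomputable def homotopyIdZero : Homotopy (𝟙 (diskCover Y)) 0 where
  hom i j := if h : j + 1 = i then
      biprod.snd ≫ (Y.XIsoOfEq (show i - 1 = j by omega)).hom ≫ biprod.inl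
    else 0
  zero i j hij := dif_neg hij
  comm i := by
    rw [dNext_eq _ (show (ComplexShape.up ℤ).Rel i (i + 1) from rfl),
      prevD_eq _ (show (ComplexShape.up ℤ).Rel (i - 1) i by simp), dif_pos rfl,
      dif_pos (by omega), d_eq, show (diskCover Y).d (i - 1) i = _ from dif_pos (by omega)]
    apply biprod.hom_ext' <;> simp

end diskCover

theorem nonempty_homotopy_id_zero_of_projective [Projective Y] :
    Nonempty (Homotopy (𝟙 Y) 0) := by
  let σ := Projective.factorThru (𝟙 Y) (diskCover.π Y)
  have h := ((diskCover.homotopyIdZero Y).compRight (diskCover.π Y)).compLeft σ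
  exact ⟨(Homotopy.ofEq (by simp [σ])).trans (h.trans (Homotopy.ofEq (by simp)))⟩

end CochainComplex

section Transfer

variable {W C : Type*} [Category* W] [Category* C]

theorem HomIntoExact.map_of_representableBy [HasZeroMorphisms W] [HasZeroMorphisms C]
    (F : W ⥤ C) [F.PreservesZeroMorphisms] {P : CochainComplex W ℤ} {Q : C} {D : W}
    (e : (F.op ⋙ yoneda.obj Q).RepresentableBy D) (hP : HomIntoExact P D) :
    HomIntoExact ((F.mapHomologicalComplex _).obj P) Q := by
  let ε {X : W} : (X ⟶ D) ≃ (F.obj X ⟶ Q) := e.homEquiv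
  have hε {X X' : W} (u : X ⟶ X') (g : X' ⟶ D) : ε (u ≫ g) = F.map u ≫ ε g :=
    e.homEquiv_comp u g
  have hε₀ (X : W) : ε (0 : X ⟶ D) = 0 := by simpa using hε 0 (𝟙 D)
  intro n f hf
  change F.obj (P.X n) ⟶ Q at f
  change F.map (P.d (n - 1) n) ≫ f = 0 at hf
  obtain ⟨g, hg⟩ := hP n (ε.symm f) <| ε.injective <| by
    rw [hε, ε.apply_symm_apply, hε₀, hf]
  refine ⟨ε g, ?_⟩
  change F.map (P.d n (n + 1)) ≫ ε g = f
  rw [← hε, hg, ε.apply_symm_apply]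

theorem HomFromExact.map_of_corepresentableBy [HasZeroMorphisms W] [HasZeroMorphisms C]
    (F : W ⥤ C) [F.PreservesZeroMorphisms] {P : CochainComplex W ℤ} {Q : C} {D : W}
    (e : (F ⋙ coyoneda.obj (op Q)).CorepresentableBy D) (hP : HomFromExact P D) :
    HomFromExact ((F.mapHomologicalComplex _).obj P) Q := by
  let ε {X : W} : (D ⟶ X) ≃ (Q ⟶ F.obj X) := e.homEquiv
  have hε {X X' : W} (g : D ⟶ X) (u : X ⟶ X') : ε (g ≫ u) = ε g ≫ F.map u :=
    e.homEquiv_comp u g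
  have hε₀ (X : W) : ε (0 : D ⟶ X) = 0 := by simpa using hε (𝟙 D) 0
  intro n f hf
  change Q ⟶ F.obj (P.X n) at f
  change f ≫ F.map (P.d n (n + 1)) = 0 at hf
  obtain ⟨g, hg⟩ := hP n (ε.symm f) <| ε.injective <| by
    rw [hε, ε.apply_symm_apply, hε₀, hf]
  refine ⟨ε g, ?_⟩
  change ε g ≫ F.map (P.d (n - 1) n) = f
  rw [← hε, hg, ε.apply_symm_apply]

variable [Preadditive C] {P : CochainComplex (CochainComplex C ℤ) ℤ} {Y : CochainComplex C ℤ}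

theorem HomIntoExact.of_rows (hY : Homotopy (𝟙 Y) 0)
    (hrows : ∀ k, HomIntoExact (((HomologicalComplex.eval C _ k).mapHomologicalComplex _).obj P)
      (Y.X k)) :
    HomIntoExact P Y := by
  intro n f hf
  have hf' (k : ℤ) := HomologicalComplex.congr_hom hf k
  simp only [HomologicalComplex.comp_f, HomologicalComplex.zero_f] at hf'
  choose g hg using fun k => hrows k n (f.f k) (hf' k)
  exact CochainComplex.exists_extension_of_homotopy_id_zero hY (P.d n (n + 1)) f g hg

theorem HomFromExact.of_rows (hY : Homotopy (𝟙 Y) 0)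
    (hrows : ∀ k, HomFromExact (((HomologicalComplex.eval C _ k).mapHomologicalComplex _).obj P)
      (Y.X k)) :
    HomFromExact P Y := by
  intro n f hf
  have hf' (k : ℤ) := HomologicalComplex.congr_hom hf k
  simp only [HomologicalComplex.comp_f, HomologicalComplex.zero_f] at hf'
  choose g hg using fun k => hrows k n (f.f k) (hf' k)
  exact CochainComplex.exists_lift_of_homotopy_id_zero hY (P.d (n - 1) n) f g hg

end Transfer

theorem totallyAcyclic_iff_rows_totallyAcyclic_general
    (R : Type) [Ring R]
    (P : CochainComplex (CochainComplex (ModuleCat R) ℤ) ℤ) :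
    IsTotallyAcyclic (fun Y : CochainComplex (ModuleCat R) ℤ => Projective Y) P ↔
      ∀ j : ℤ, IsTotallyAcyclic (fun M : ModuleCat R => Projective M)
        (((HomologicalComplex.eval (ModuleCat R) (ComplexShape.up ℤ) j).mapHomologicalComplex
          (ComplexShape.up ℤ)).obj P) := by
  constructor
  · intro hP j M hM
    have hprev : (ComplexShape.up ℤ).Rel (j - 1) j := by simp
    have hnext : (ComplexShape.up ℤ).Rel j (j + 1) := rfl
    exact ⟨HomIntoExact.map_of_representableBy _
        (HomologicalComplex.evalOpCompYonedaRepresentableByDoubleId hprev (by omega) M)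
        (hP _ (HomologicalComplex.projective_double_id hprev (by omega) M)).1,
      HomFromExact.map_of_corepresentableBy _
        (HomologicalComplex.evalCompCoyonedaCorepresentableByDoubleId hnext (by omega) M)
        (hP _ (HomologicalComplex.projective_double_id hnext (by omega) M)).2⟩
  · intro hrows Y hY
    obtain ⟨h⟩ := CochainComplex.nonempty_homotopy_id_zero_of_projective Y
    have hYX (k : ℤ) : Projective (Y.X k) :=
      HomologicalComplex.projective_X_of_projective
        (show (ComplexShape.up ℤ).Rel (k - 1) k by simp) (by omega) Y
    exact ⟨HomIntoExact.of_rows h fun k => (hrows k _ (hYX k)).1,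
      HomFromExact.of_rows h fun k => (hrows k _ (hYX k)).2⟩

/-- Let `P` be an object of `K(Prj C(R))`, i.e. a complex of projective
complexes of `R`-modules.  Then `P` is a totally acyclic complex of projective objects of
`C(R)` if and only if for every `j ∈ ℤ` its `j`-th row `P^j` is a totally acyclic complex
of projective `R`-modules. -/
theorem totallyAcyclic_iff_rows_totallyAcyclic
    (R : Type) [Ring R]
    (P : CochainComplex (CochainComplex (ModuleCat R) ℤ) ℤ)
    (hproj : ∀ i : ℤ, Projective (P.X i)) :
    IsTotallyAcyclic (fun Y : CochainComplex (ModuleCat R) ℤ => Projective Y) P ↔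
      ∀ j : ℤ, IsTotallyAcyclic (fun M : ModuleCat R => Projective M)
        (((HomologicalComplex.eval (ModuleCat R) (ComplexShape.up ℤ) j).mapHomologicalComplex
          (ComplexShape.up ℤ)).obj P) :=
  totallyAcyclic_iff_rows_totallyAcyclic_general R P
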